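/- arXiv:2306.15285 — 3 statements merged into one kernel-verified Lean document; each statement's English description precedes it below -/
import Mathlib

section
/- Let $\lambda>0$, $t>0$, and let $\varphi:[0,t]\to\mathbb{R}$ be continuously differentiable. Then $I_{\lambda,t}^0(\varphi)\leq C\bigl(|\varphi(0)|+S^*_{\lambda,t}(|\varphi'|)\bigr)$ for an absolute constant $C$, where $I^0_{\lambda,t}(\varphi)=\sup_{t'\in[0,t]}e^{-\lambda t'}|\varphi(t')|+\sqrt{\lambda}\,\|e^{-\lambda\cdot}\varphi\|_{L^2(0,t)}$ and $S^*_{\lambda,t}$ is the dual norm of $I_{\lambda,t}$ with respect to the weighted pairing $\int_0^te^{-2\lambda t'}fg$. -/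
open Set MeasureTheory intervalIntegral

/-- Cauchy–Schwarz for interval integrals of continuous functions. -/
lemma cs_interval {a b : ℝ} (hab : a ≤ b) {f g : ℝ → ℝ}
    (hf : ContinuousOn f (Set.Icc a b)) (hg : ContinuousOn g (Set.Icc a b)) :
    ∫ x in a..b, f x * g x ≤
      Real.sqrt (∫ x in a..b, f x ^ 2) * Real.sqrt (∫ x in a..b, g x ^ 2) := by
  have hif : IntervalIntegrable (fun x => f x ^ 2) volume a b :=
    (hf.pow 2).intervalIntegrable_of_Icc hab
  have hig : IntervalIntegrable (fun x => g x ^ 2) volume a b :=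
    (hg.pow 2).intervalIntegrable_of_Icc hab
  have hifg : IntervalIntegrable (fun x => f x * g x) volume a b :=
    (hf.mul hg).intervalIntegrable_of_Icc hab
  set A := ∫ x in a..b, f x ^ 2 with hA
  set B := ∫ x in a..b, f x * g x with hB
  set C := ∫ x in a..b, g x ^ 2 with hC
  have hA0 : 0 ≤ A := integral_nonneg hab (fun x _ => sq_nonneg _)
  have hC0 : 0 ≤ C := integral_nonneg hab (fun x _ => sq_nonneg _)
  have key : ∀ c : ℝ, 0 ≤ A * (c * c) + (-2 * B) * c + C := by
    intro c
    have h0 : 0 ≤ ∫ x in a..b, (c * f x - g x) ^ 2 :=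
      integral_nonneg hab (fun x _ => sq_nonneg _)
    have hexp : (fun x => (c * f x - g x) ^ 2)
        = fun x => (c * c) * f x ^ 2 - (2 * c) * (f x * g x) + g x ^ 2 := by
      funext x; ring
    rw [hexp] at h0
    rw [integral_add (((hif.const_mul _)).sub (hifg.const_mul _)) hig,
      integral_sub (hif.const_mul _) (hifg.const_mul _),
      intervalIntegral.integral_const_mul, intervalIntegral.integral_const_mul] at h0
    rw [← hA, ← hB, ← hC] at h0
    nlinarith [h0]
  have hd := discrim_le_zero key
  rw [discrim] at hd
  have hB2 : B ^ 2 ≤ A * C := by nlinarith [hd]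
  calc B ≤ |B| := le_abs_self B
    _ = Real.sqrt (B ^ 2) := (Real.sqrt_sq_eq_abs B).symm
    _ ≤ Real.sqrt (A * C) := Real.sqrt_le_sqrt hB2
    _ = Real.sqrt A * Real.sqrt C := Real.sqrt_mul hA0 C

/-- `∫_a^b e^{c(s-b)} ds ≤ 1/c`. -/
lemma int_exp_right_le {c a b : ℝ} (hc : 0 < c) (hab : a ≤ b) :
    ∫ s in a..b, Real.exp (c * (s - b)) ≤ 1 / c := by
  have hd : ∀ s ∈ Set.uIcc a b,
      HasDerivAt (fun s => Real.exp (c * (s - b)) / c) (Real.exp (c * (s - b))) s := by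
    intro s _
    have h1 : HasDerivAt (fun s : ℝ => c * (s - b)) c s := by
      simpa using ((hasDerivAt_id s).sub_const b).const_mul c
    have h2 := (h1.exp).div_const c
    simpa [mul_div_assoc, mul_div_cancel_right₀ _ hc.ne'] using h2
  have hint : IntervalIntegrable (fun s => Real.exp (c * (s - b))) volume a b :=
    (Real.continuous_exp.comp (by continuity)).intervalIntegrable a b
  rw [integral_eq_sub_of_hasDerivAt hd hint]
  have h1 : Real.exp (c * (b - b)) = 1 := by simp
  have h2 : 0 < Real.exp (c * (a - b)) := Real.exp_pos _
  rw [h1]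
  rw [div_sub_div_same, div_le_div_iff₀ hc hc]
  nlinarith [h2]

/-- `∫_a^b e^{c(a-s)} ds ≤ 1/c`. -/
lemma int_exp_left_le {c a b : ℝ} (hc : 0 < c) (hab : a ≤ b) :
    ∫ s in a..b, Real.exp (c * (a - s)) ≤ 1 / c := by
  have hd : ∀ s ∈ Set.uIcc a b,
      HasDerivAt (fun s => -(Real.exp (c * (a - s)) / c)) (Real.exp (c * (a - s))) s := by
    intro s _
    have h1 : HasDerivAt (fun s : ℝ => c * (a - s)) (-c) s := by
      simpa using ((hasDerivAt_id s).const_sub a).const_mul c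
    have h2 := ((h1.exp).div_const c).neg
    have h3 : -(Real.exp (c * (a - s)) * -c / c) = Real.exp (c * (a - s)) := by
      field_simp
    rw [h3] at h2
    exact h2
  have hint : IntervalIntegrable (fun s => Real.exp (c * (a - s))) volume a b :=
    (Real.continuous_exp.comp (by continuity)).intervalIntegrable a b
  rw [integral_eq_sub_of_hasDerivAt hd hint]
  have h1 : Real.exp (c * (a - a)) = 1 := by simp
  have h2 : 0 < Real.exp (c * (a - b)) := Real.exp_pos _
  rw [h1]
  have h3 : 0 < Real.exp (c * (a - b)) / c := by positivity
  linarith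

lemma sqrt_mul_sqrt_le {a Y M : ℝ} (ha : 0 ≤ a) (hY : 0 ≤ Y) (hM : 0 ≤ M)
    (h : a * Y ≤ M ^ 2) : Real.sqrt a * Real.sqrt Y ≤ M := by
  rw [← Real.sqrt_mul ha]
  calc Real.sqrt (a * Y) ≤ Real.sqrt (M ^ 2) := Real.sqrt_le_sqrt h
    _ = M := Real.sqrt_sq hM



open Set

/-- The weighted norm `I_{λ,t}(f) = sup_{[0,t]} e^{-λt'}|f(t')| + √λ ‖e^{-λ·}f‖_{L²(0,t)}`. -/
noncomputable def Ilam (lam t : ℝ) (f : ℝ → ℝ) : ℝ :=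
  (⨆ t' : Set.Icc (0 : ℝ) t, Real.exp (-lam * t') * |f t'|) +
    Real.sqrt lam * Real.sqrt (∫ t' in (0 : ℝ)..t, Real.exp (-2 * lam * t') * f t' ^ 2)

/-- The dual norm `S*_{λ,t}(f) = sup { |∫₀ᵗ e^{-2λt'} f φ| : I_{λ,t}(φ) ≤ 1 }` (the
supremum being taken over continuous test functions). -/
noncomputable def Sstar (lam t : ℝ) (f : ℝ → ℝ) : ℝ :=
  sSup {r : ℝ | ∃ φ : ℝ → ℝ, Continuous φ ∧ Ilam lam t φ ≤ 1 ∧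
    r = |∫ t' in (0 : ℝ)..t, Real.exp (-2 * lam * t') * f t' * φ t'|}

lemma Ilam_sup_le {lam t : ℝ} (ht : 0 ≤ t) {ψ : ℝ → ℝ} (hψ : Continuous ψ) {c : ℝ}
    (h : Ilam lam t ψ ≤ c) :
    ∀ s ∈ Set.Icc (0 : ℝ) t, Real.exp (-lam * s) * |ψ s| ≤ c := by
  haveI : Nonempty (Set.Icc (0 : ℝ) t) := ⟨⟨0, le_refl 0, ht⟩⟩
  intro s hs
  have hb : BddAbove (Set.range fun x : Set.Icc (0 : ℝ) t => Real.exp (-lam * x) * |ψ x|) := by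
    have hcont : Continuous fun x : Set.Icc (0 : ℝ) t => Real.exp (-lam * x) * |ψ x| := by
      apply Continuous.mul
      · exact Real.continuous_exp.comp ((continuous_const.mul continuous_subtype_val))
      · exact (hψ.comp continuous_subtype_val).abs
    exact (isCompact_range hcont).bddAbove
  have h1 : Real.exp (-lam * s) * |ψ s| ≤
      ⨆ x : Set.Icc (0 : ℝ) t, Real.exp (-lam * x) * |ψ x| := le_ciSup hb ⟨s, hs⟩
  have h2 : 0 ≤ Real.sqrt lam *
      Real.sqrt (∫ t' in (0 : ℝ)..t, Real.exp (-2 * lam * t') * ψ t' ^ 2) :=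
    mul_nonneg (Real.sqrt_nonneg _) (Real.sqrt_nonneg _)
  unfold Ilam at h
  linarith

lemma Ilam_le_one {lam t : ℝ} (ht : 0 ≤ t) {ψ : ℝ → ℝ}
    (h1 : ∀ s ∈ Set.Icc (0 : ℝ) t, Real.exp (-lam * s) * |ψ s| ≤ 1 / 2)
    (h2 : Real.sqrt lam *
      Real.sqrt (∫ s in (0 : ℝ)..t, Real.exp (-2 * lam * s) * ψ s ^ 2) ≤ 1 / 2) :
    Ilam lam t ψ ≤ 1 := by
  haveI : Nonempty (Set.Icc (0 : ℝ) t) := ⟨⟨0, le_refl 0, ht⟩⟩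
  unfold Ilam
  have := ciSup_le (fun x : Set.Icc (0 : ℝ) t => h1 x x.2)
  linarith

lemma Sstar_bddAbove {lam t : ℝ} (hlam : 0 < lam) (ht : 0 < t) {f : ℝ → ℝ}
    (hf : ContinuousOn f (Set.Icc 0 t)) :
    BddAbove {r : ℝ | ∃ φ : ℝ → ℝ, Continuous φ ∧ Ilam lam t φ ≤ 1 ∧
      r = |∫ t' in (0 : ℝ)..t, Real.exp (-2 * lam * t') * f t' * φ t'|} := by
  refine ⟨∫ s in (0 : ℝ)..t, Real.exp (-2 * lam * s) * |f s| * Real.exp (lam * t), ?_⟩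
  rintro r ⟨ψ, hψc, hψI, rfl⟩
  have hsup := Ilam_sup_le ht.le hψc hψI
  have hψb : ∀ s ∈ Set.Icc (0 : ℝ) t, |ψ s| ≤ Real.exp (lam * t) := by
    intro s hs
    have e1 : Real.exp (-lam * s) * Real.exp (lam * s) = 1 := by
      rw [← Real.exp_add]; norm_num
    have e2 : Real.exp (lam * s) ≤ Real.exp (lam * t) :=
      Real.exp_le_exp.mpr (mul_le_mul_of_nonneg_left hs.2 hlam.le)
    nlinarith [hsup s hs, (Real.exp_pos (lam * s)).le, abs_nonneg (ψ s),
      Real.exp_pos (-lam * s)]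
  have hint1 : IntervalIntegrable
      (fun s => Real.exp (-2 * lam * s) * f s * ψ s) volume 0 t := by
    apply ContinuousOn.intervalIntegrable_of_Icc ht.le
    exact (((Real.continuous_exp.comp (by continuity)).continuousOn.mul hf).mul
      hψc.continuousOn)
  calc |∫ t' in (0 : ℝ)..t, Real.exp (-2 * lam * t') * f t' * ψ t'|
      ≤ ∫ t' in (0 : ℝ)..t, |Real.exp (-2 * lam * t') * f t' * ψ t'| :=
        intervalIntegral.abs_integral_le_integral_abs ht.le
    _ ≤ ∫ s in (0 : ℝ)..t, Real.exp (-2 * lam * s) * |f s| * Real.exp (lam * t) := by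
        apply intervalIntegral.integral_mono_on ht.le hint1.abs
        · apply ContinuousOn.intervalIntegrable_of_Icc ht.le
          exact (((Real.continuous_exp.comp (by continuity)).continuousOn.mul hf.abs).mul
            continuousOn_const)
        · intro x hx
          rw [abs_mul, abs_mul, abs_of_pos (Real.exp_pos _)]
          have := hψb x hx
          have h2 : 0 ≤ Real.exp (-2 * lam * x) * |f x| :=
            mul_nonneg (Real.exp_pos _).le (abs_nonneg _)
          exact mul_le_mul_of_nonneg_left this h2

lemma Sstar_nonneg {lam t : ℝ} (hlam : 0 < lam) (ht : 0 < t) {f : ℝ → ℝ}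
    (hf : ContinuousOn f (Set.Icc 0 t)) : 0 ≤ Sstar lam t f := by
  haveI : Nonempty (Set.Icc (0 : ℝ) t) := ⟨⟨0, le_refl 0, ht.le⟩⟩
  apply le_csSup (Sstar_bddAbove hlam ht hf)
  refine ⟨fun _ => 0, continuous_const, ?_, by simp⟩
  unfold Ilam
  simp

set_option maxHeartbeats 2000000 in
/-- there is an absolute constant `C` such that for every `λ, t > 0` and
every continuously differentiable `φ` on `[0,t]`,
`I⁰_{λ,t}(φ) ≤ C (|φ(0)| + S*_{λ,t}(|φ'|))`. -/
theorem stmt14 :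
    ∃ C : ℝ, 0 < C ∧
      ∀ (lam t : ℝ), 0 < lam → 0 < t →
        ∀ (φ φ' : ℝ → ℝ),
          (∀ s ∈ Set.Icc (0 : ℝ) t, HasDerivAt φ (φ' s) s) →
          ContinuousOn φ' (Set.Icc (0 : ℝ) t) →
          Ilam lam t φ ≤ C * (|φ 0| + Sstar lam t (fun s => |φ' s|)) := by
  refine ⟨5, by norm_num, ?_⟩
  intro lam t hlam ht φ φ' hderiv hcont
  haveI : Nonempty (Set.Icc (0 : ℝ) t) := ⟨⟨0, le_refl 0, ht.le⟩⟩
  have habs : ContinuousOn (fun s => |φ' s|) (Set.Icc (0:ℝ) t) := hcont.abs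
  set S := Sstar lam t (fun s => |φ' s|) with hSdef
  have hS0 : 0 ≤ S := Sstar_nonneg hlam ht habs
  have hSle : ∀ ψ : ℝ → ℝ, Continuous ψ → Ilam lam t ψ ≤ 1 →
      |∫ s in (0:ℝ)..t, Real.exp (-2*lam*s) * |φ' s| * ψ s| ≤ S := by
    intro ψ h1 h2
    exact le_csSup (Sstar_bddAbove hlam ht habs) ⟨ψ, h1, h2, rfl⟩
  -- the running integral of |φ'|
  set g : ℝ → ℝ := fun r => |φ' (max 0 (min r t))| with hgdef
  have hgcont : Continuous g := by
    apply ContinuousOn.comp_continuous hcont.abs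
      (continuous_const.max (continuous_id.min continuous_const))
    intro x
    constructor
    · exact le_max_left 0 _
    · exact max_le (le_of_lt ht) (min_le_right x t)
  have hgeq : ∀ r ∈ Set.Icc (0:ℝ) t, g r = |φ' r| := by
    intro r hr
    simp only [hgdef]
    rw [min_eq_left hr.2, max_eq_right hr.1]
  have hgnonneg : ∀ r, 0 ≤ g r := fun r => abs_nonneg _
  set F : ℝ → ℝ := fun s => ∫ r in (0:ℝ)..s, g r with hFdef
  have hFderiv : ∀ s, HasDerivAt F (g s) s :=
    fun s => (hgcont.integral_hasStrictDerivAt 0 s).hasDerivAt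
  have hFcont : Continuous F :=
    continuous_iff_continuousAt.mpr fun s => (hFderiv s).continuousAt
  have hF0 : F 0 = 0 := integral_same
  have hFnonneg : ∀ s, 0 ≤ s → 0 ≤ F s :=
    fun s hs => integral_nonneg hs (fun r _ => hgnonneg r)
  have hφbound : ∀ s ∈ Set.Icc (0:ℝ) t, |φ s| ≤ |φ 0| + F s := by
    intro s hs
    have hsub : Set.uIcc (0:ℝ) s ⊆ Set.Icc (0:ℝ) t := by
      rw [Set.uIcc_of_le hs.1]
      exact Set.Icc_subset_Icc (le_refl 0) hs.2
    have heq : ∫ r in (0:ℝ)..s, φ' r = φ s - φ 0 :=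
      intervalIntegral.integral_eq_sub_of_hasDerivAt
        (fun x hx => hderiv x (hsub hx))
        ((hcont.mono hsub).intervalIntegrable)
    have h1 : |∫ r in (0:ℝ)..s, φ' r| ≤ ∫ r in (0:ℝ)..s, |φ' r| :=
      intervalIntegral.abs_integral_le_integral_abs hs.1
    have h2 : (∫ r in (0:ℝ)..s, |φ' r|) = F s := by
      apply intervalIntegral.integral_congr
      intro r hr
      exact (hgeq r (hsub hr)).symm
    rw [heq, h2] at h1
    calc |φ s| = |φ 0 + (φ s - φ 0)| := by ring_nf
      _ ≤ |φ 0| + |φ s - φ 0| := abs_add_le _ _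
      _ ≤ |φ 0| + F s := by linarith
  set w : ℝ → ℝ := fun r => Real.exp (-2*lam*r) * F r with hwdef
  have hwcont : Continuous w := (Real.continuous_exp.comp (continuous_const.mul continuous_id)).mul hFcont
  set G : ℝ → ℝ := fun s => (∫ r in (0:ℝ)..t, w r) - ∫ r in (0:ℝ)..s, w r with hGdef
  have hGderiv : ∀ s, HasDerivAt G (-(w s)) s := fun s =>
    ((hwcont.integral_hasStrictDerivAt 0 s).hasDerivAt).const_sub _
  have hGcont : Continuous G :=
    continuous_iff_continuousAt.mpr fun s => (hGderiv s).continuousAt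
  have hGt : G t = 0 := sub_self _
  have hGalt : ∀ s, G s = ∫ r in s..t, w r := by
    intro s
    rw [hGdef]
    exact intervalIntegral.integral_interval_sub_left
      (hwcont.intervalIntegrable 0 t) (hwcont.intervalIntegrable 0 s)
  have hGnonneg : ∀ s ∈ Set.Icc (0:ℝ) t, 0 ≤ G s := by
    intro s hs
    rw [hGalt]
    exact integral_nonneg hs.2 (fun r hr =>
      mul_nonneg (Real.exp_pos _).le (hFnonneg r (le_trans hs.1 hr.1)))
  set NN := ∫ r in (0:ℝ)..t, Real.exp (-2*lam*r) * F r ^ 2 with hNNdef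
  have hNN0 : 0 ≤ NN := integral_nonneg ht.le
    (fun r _ => mul_nonneg (Real.exp_pos _).le (sq_nonneg _))
  set N := Real.sqrt NN with hNdef
  have hN0 : 0 ≤ N := Real.sqrt_nonneg _
  have hNsq : N ^ 2 = NN := Real.sq_sqrt hNN0
  -- Fact S : pointwise bound on F via duality
  have factS : ∀ t' ∈ Set.Icc (0:ℝ) t, Real.exp (-lam * t') * F t' ≤ 2 * S := by
    intro t' ht'
    set ψ : ℝ → ℝ := fun s => Real.exp (2*lam*(min s t') - lam*t') / 2 with hψdef
    have hψc : Continuous ψ := by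
      apply Continuous.div_const
      exact Real.continuous_exp.comp
        (((continuous_const.mul (continuous_id.min continuous_const))).sub continuous_const)
    have hψpos : ∀ s, 0 < ψ s := fun s => by positivity
    have hψsup : ∀ s ∈ Set.Icc (0:ℝ) t, Real.exp (-lam * s) * |ψ s| ≤ 1/2 := by
      intro s hs
      rw [abs_of_pos (hψpos s), hψdef]
      simp only
      rw [← mul_div_assoc, ← Real.exp_add]
      have hexp : -lam*s + (2*lam*(min s t') - lam*t') ≤ 0 := by
        nlinarith [min_le_left s t', min_le_right s t']
      have := Real.exp_le_one_iff.mpr hexp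
      linarith
    have hY0 : 0 ≤ ∫ s in (0:ℝ)..t, Real.exp (-2*lam*s) * ψ s ^ 2 :=
      integral_nonneg ht.le (fun s _ => mul_nonneg (Real.exp_pos _).le (sq_nonneg _))
    have hiY1 : IntervalIntegrable (fun s => Real.exp (-2*lam*s) * ψ s ^ 2) volume 0 t' :=
      (((Real.continuous_exp.comp (continuous_const.mul continuous_id)).mul (hψc.pow 2))).intervalIntegrable 0 t'
    have hiY2 : IntervalIntegrable (fun s => Real.exp (-2*lam*s) * ψ s ^ 2) volume t' t :=
      (((Real.continuous_exp.comp (continuous_const.mul continuous_id)).mul (hψc.pow 2))).intervalIntegrable t' t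
    have hY1 : (∫ s in (0:ℝ)..t', Real.exp (-2*lam*s) * ψ s ^ 2) ≤ 1/(8*lam) := by
      have hcg : (∫ s in (0:ℝ)..t', Real.exp (-2*lam*s) * ψ s ^ 2)
          = ∫ s in (0:ℝ)..t', Real.exp (2*lam*(s - t')) / 4 := by
        apply intervalIntegral.integral_congr
        intro s hsm
        rw [Set.uIcc_of_le ht'.1] at hsm
        simp only [hψdef]
        rw [min_eq_left hsm.2]
        rw [div_pow, sq, ← Real.exp_add, ← mul_div_assoc, ← Real.exp_add]
        norm_num
        congr 1
        ring
      rw [hcg, intervalIntegral.integral_div]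
      have h1 := int_exp_right_le (show (0:ℝ) < 2*lam by positivity) ht'.1 (b := t')
      have h2 : (1:ℝ)/(2*lam)/4 = 1/(8*lam) := by field_simp; ring
      linarith
    have hY2 : (∫ s in t'..t, Real.exp (-2*lam*s) * ψ s ^ 2) ≤ 1/(8*lam) := by
      have hcg : (∫ s in t'..t, Real.exp (-2*lam*s) * ψ s ^ 2)
          = ∫ s in t'..t, Real.exp (2*lam*(t' - s)) / 4 := by
        apply intervalIntegral.integral_congr
        intro s hsm
        rw [Set.uIcc_of_le ht'.2] at hsm
        simp only [hψdef]
        rw [min_eq_right hsm.1]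
        rw [div_pow, sq, ← Real.exp_add, ← mul_div_assoc, ← Real.exp_add]
        norm_num
        congr 1
        ring
      rw [hcg, intervalIntegral.integral_div]
      have h1 := int_exp_left_le (show (0:ℝ) < 2*lam by positivity) ht'.2 (a := t')
      have h2 : (1:ℝ)/(2*lam)/4 = 1/(8*lam) := by field_simp; ring
      linarith
    have hψL2 : Real.sqrt lam *
        Real.sqrt (∫ s in (0:ℝ)..t, Real.exp (-2*lam*s) * ψ s ^ 2) ≤ 1/2 := by
      apply sqrt_mul_sqrt_le hlam.le hY0 (by norm_num)
      have hsplit := intervalIntegral.integral_add_adjacent_intervals hiY1 hiY2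
      rw [← hsplit]
      rw [show ((1:ℝ)/2)^2 = 1/4 by norm_num]
      rw [mul_comm, ← le_div_iff₀ hlam]
      have : 1/(8*lam) + 1/(8*lam) = (1/4)/lam := by field_simp; ring
      linarith
    have hψI : Ilam lam t ψ ≤ 1 := Ilam_le_one ht.le hψsup hψL2
    have hP := hSle ψ hψc hψI
    set P := ∫ s in (0:ℝ)..t, Real.exp (-2*lam*s) * |φ' s| * ψ s with hPdef
    have hip : ContinuousOn (fun s => Real.exp (-2*lam*s) * |φ' s| * ψ s) (Set.Icc (0:ℝ) t) :=
      ((Real.continuous_exp.comp (continuous_const.mul continuous_id)).continuousOn.mul hcont.abs).mul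
        hψc.continuousOn
    have hi1 : IntervalIntegrable (fun s => Real.exp (-2*lam*s) * |φ' s| * ψ s) volume 0 t' :=
      (hip.mono (Set.Icc_subset_Icc (le_refl 0) ht'.2)).intervalIntegrable_of_Icc ht'.1
    have hi2 : IntervalIntegrable (fun s => Real.exp (-2*lam*s) * |φ' s| * ψ s) volume t' t :=
      (hip.mono (Set.Icc_subset_Icc ht'.1 (le_refl t))).intervalIntegrable_of_Icc ht'.2
    have hPsplit := intervalIntegral.integral_add_adjacent_intervals hi1 hi2
    have hfirst : (∫ s in (0:ℝ)..t', Real.exp (-2*lam*s) * |φ' s| * ψ s)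
        = Real.exp (-lam*t')/2 * F t' := by
      have hcg : (∫ s in (0:ℝ)..t', Real.exp (-2*lam*s) * |φ' s| * ψ s)
          = ∫ s in (0:ℝ)..t', Real.exp (-lam*t')/2 * g s := by
        apply intervalIntegral.integral_congr
        intro s hsm
        rw [Set.uIcc_of_le ht'.1] at hsm
        simp only [hψdef]
        rw [min_eq_left hsm.2, hgeq s ⟨hsm.1, le_trans hsm.2 ht'.2⟩]
        have he : Real.exp (-2*lam*s) * Real.exp (2*lam*s - lam*t') = Real.exp (-lam*t') := by
          rw [← Real.exp_add]; congr 1; ring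
        rw [show Real.exp (-2*lam*s) * |φ' s| * (Real.exp (2*lam*s - lam*t')/2)
            = Real.exp (-2*lam*s) * Real.exp (2*lam*s - lam*t') * |φ' s| / 2 from by ring,
          he]
        ring
      rw [hcg, intervalIntegral.integral_const_mul]
    have hsecond : 0 ≤ ∫ s in t'..t, Real.exp (-2*lam*s) * |φ' s| * ψ s :=
      integral_nonneg ht'.2 (fun s _ =>
        mul_nonneg (mul_nonneg (Real.exp_pos _).le (abs_nonneg _)) (hψpos s).le)
    have hPge : Real.exp (-lam*t')/2 * F t' ≤ P := by
      rw [hPdef, ← hPsplit, hfirst]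
      linarith
    have habsP := le_abs_self P
    linarith
  -- Fact N : L² bound on F via duality
  have hwFcont : Continuous (fun r => Real.exp (-2*lam*r) * F r ^ 2) :=
    (Real.continuous_exp.comp (continuous_const.mul continuous_id)).mul (hFcont.pow 2)
  have hNNmono : ∀ s ∈ Set.Icc (0:ℝ) t,
      (∫ r in s..t, Real.exp (-2*lam*r) * F r ^ 2) ≤ NN := by
    intro s hs
    have hadd : (∫ r in (0:ℝ)..s, Real.exp (-2*lam*r) * F r ^ 2)
        + (∫ r in s..t, Real.exp (-2*lam*r) * F r ^ 2)
        = ∫ r in (0:ℝ)..t, Real.exp (-2*lam*r) * F r ^ 2 :=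
      intervalIntegral.integral_add_adjacent_intervals
        (hwFcont.intervalIntegrable 0 s) (hwFcont.intervalIntegrable s t)
    have h0 : 0 ≤ ∫ r in (0:ℝ)..s, Real.exp (-2*lam*r) * F r ^ 2 :=
      integral_nonneg hs.1 (fun r _ => mul_nonneg (Real.exp_pos _).le (sq_nonneg _))
    rw [hNNdef]
    linarith [hadd]
  have factN : Real.sqrt lam * N ≤ 2 * S := by
    rcases eq_or_lt_of_le hN0 with hN | hN
    · rw [← hN, mul_zero]; linarith
    have hNN : 0 < NN := by nlinarith [hNsq]
    have hsl0 : 0 < Real.sqrt lam := Real.sqrt_pos.mpr hlam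
    set Q := Real.sqrt (2*lam) with hQdef
    have hQpos : 0 < Q := Real.sqrt_pos.mpr (by positivity)
    have hQge : Real.sqrt lam ≤ Q := Real.sqrt_le_sqrt (by linarith)
    -- pointwise bound on exp(lam*s) * G s
    have hGbd : ∀ s ∈ Set.Icc (0:ℝ) t, Real.exp (lam*s) * G s ≤ N / Q := by
      intro s hs
      have hcs := cs_interval hs.2 (f := fun r => Real.exp (-lam*r))
        (g := fun r => Real.exp (-lam*r) * F r)
        (Real.continuous_exp.comp (continuous_const.mul continuous_id)).continuousOn
        ((Real.continuous_exp.comp (continuous_const.mul continuous_id)).mul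
          hFcont).continuousOn
      have h1 : (∫ r in s..t, Real.exp (-lam*r) * (Real.exp (-lam*r) * F r)) = G s := by
        rw [hGalt]
        apply intervalIntegral.integral_congr
        intro r _
        simp only [hwdef]
        have he : Real.exp (-lam*r) * Real.exp (-lam*r) = Real.exp (-2*lam*r) := by
          rw [← Real.exp_add]; congr 1; ring
        linear_combination F r * he
      have h2 : (∫ r in s..t, (Real.exp (-lam*r))^2) = ∫ r in s..t, Real.exp (-2*lam*r) := by
        apply intervalIntegral.integral_congr
        intro r _
        show Real.exp (-lam*r)^2 = Real.exp (-2*lam*r)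
        rw [sq, ← Real.exp_add]; congr 1; ring
      have h3 : (∫ r in s..t, Real.exp (-2*lam*r)) ≤ Real.exp (-2*lam*s) * (1/(2*lam)) := by
        have hcg : (∫ r in s..t, Real.exp (-2*lam*r))
            = ∫ r in s..t, Real.exp (-2*lam*s) * Real.exp (2*lam*(s - r)) := by
          apply intervalIntegral.integral_congr
          intro r _
          show Real.exp (-2*lam*r) = Real.exp (-2*lam*s) * Real.exp (2*lam*(s - r))
          rw [← Real.exp_add]; congr 1; ring
        rw [hcg, intervalIntegral.integral_const_mul]
        exact mul_le_mul_of_nonneg_left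
          (int_exp_left_le (show (0:ℝ) < 2*lam by positivity) hs.2) (Real.exp_pos _).le
      have h4 : (∫ r in s..t, (Real.exp (-lam*r) * F r)^2) ≤ NN := by
        have hcg : (∫ r in s..t, (Real.exp (-lam*r) * F r)^2)
            = ∫ r in s..t, Real.exp (-2*lam*r) * F r ^ 2 := by
          apply intervalIntegral.integral_congr
          intro r _
          show (Real.exp (-lam*r) * F r)^2 = Real.exp (-2*lam*r) * F r ^ 2
          rw [mul_pow, sq (Real.exp (-lam*r)), ← Real.exp_add]
          congr 2
          ring
        rw [hcg]
        exact hNNmono s hs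
      -- combine Cauchy–Schwarz
      have h2nn : 0 ≤ ∫ r in s..t, (Real.exp (-lam*r))^2 :=
        integral_nonneg hs.2 (fun r _ => sq_nonneg _)
      have hG1 : G s ≤ Real.exp (-lam*s) * (1/Q) * N := by
        rw [← h1]
        calc (∫ r in s..t, Real.exp (-lam*r) * (Real.exp (-lam*r) * F r))
            ≤ Real.sqrt (∫ r in s..t, (Real.exp (-lam*r))^2) *
              Real.sqrt (∫ r in s..t, (Real.exp (-lam*r) * F r)^2) := hcs
          _ ≤ Real.sqrt (Real.exp (-2*lam*s) * (1/(2*lam))) * Real.sqrt NN := by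
              apply mul_le_mul (Real.sqrt_le_sqrt (by rw [← h2] at h3; exact h3))
                (Real.sqrt_le_sqrt h4) (Real.sqrt_nonneg _) (Real.sqrt_nonneg _)
          _ = Real.exp (-lam*s) * (1/Q) * N := by
              rw [Real.sqrt_mul (Real.exp_pos _).le, hNdef]
              congr 1
              · congr 1
                · rw [show Real.exp (-2*lam*s) = Real.exp (-lam*s)^2 by
                    rw [sq, ← Real.exp_add]; congr 1; ring]
                  exact Real.sqrt_sq (Real.exp_pos _).le
                · rw [one_div, one_div, hQdef, Real.sqrt_inv]
      have he : Real.exp (lam*s) * Real.exp (-lam*s) = 1 := by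
        rw [← Real.exp_add]; norm_num
      calc Real.exp (lam*s) * G s
          ≤ Real.exp (lam*s) * (Real.exp (-lam*s) * (1/Q) * N) :=
            mul_le_mul_of_nonneg_left hG1 (Real.exp_pos _).le
        _ = (Real.exp (lam*s) * Real.exp (-lam*s)) * ((1/Q) * N) := by ring
        _ = N / Q := by rw [he]; field_simp
    -- the quantity X
    set X := ∫ s in (0:ℝ)..t, Real.exp (2*lam*s) * G s ^ 2 with hXdef
    have hX0 : 0 ≤ X :=
      integral_nonneg ht.le (fun s _ => mul_nonneg (Real.exp_pos _).le (sq_nonneg _))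
    -- integration by parts for X
    have hGFint : IntervalIntegrable (fun s => G s * F s) volume 0 t :=
      (hGcont.mul hFcont).intervalIntegrable 0 t
    have hparts2 : 2*lam*X = -(G 0 ^ 2) + 2 * ∫ s in (0:ℝ)..t, G s * F s := by
      have hu : ∀ x ∈ Set.uIcc (0:ℝ) t, HasDerivAt (fun s => G s ^ 2) (2 * G x * -(w x)) x :=
        fun x _ => by simpa using (hGderiv x).fun_pow 2
      have hv : ∀ x ∈ Set.uIcc (0:ℝ) t, HasDerivAt (fun s => Real.exp (2*lam*s))
          (2*lam*Real.exp (2*lam*x)) x := by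
        intro x _
        have h1 : HasDerivAt (fun s : ℝ => 2*lam*s) (2*lam) x := by
          simpa using (hasDerivAt_id x).const_mul (2*lam)
        simpa [mul_comm] using h1.exp
      have hiu : IntervalIntegrable (fun s => 2 * G s * -(w s)) volume 0 t :=
        ((continuous_const.mul hGcont).mul hwcont.neg).intervalIntegrable 0 t
      have hiv : IntervalIntegrable (fun s => 2*lam*Real.exp (2*lam*s)) volume 0 t :=
        (continuous_const.mul (Real.continuous_exp.comp
          (continuous_const.mul continuous_id))).intervalIntegrable 0 t
      have hIBP := intervalIntegral.integral_mul_deriv_eq_deriv_mul hu hv hiu hiv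
      have hL : (∫ x in (0:ℝ)..t, G x ^ 2 * (2*lam*Real.exp (2*lam*x))) = 2*lam*X := by
        rw [hXdef, ← intervalIntegral.integral_const_mul]
        apply intervalIntegral.integral_congr
        intro x _
        ring
      have hR : (∫ x in (0:ℝ)..t, (2 * G x * -(w x)) * Real.exp (2*lam*x))
          = ∫ x in (0:ℝ)..t, -(2 * (G x * F x)) := by
        apply intervalIntegral.integral_congr
        intro x _
        simp only [hwdef]
        have he : Real.exp (-2*lam*x) * Real.exp (2*lam*x) = 1 := by
          rw [← Real.exp_add]; norm_num
        linear_combination (-(2*G x * F x)) * he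
      rw [hL, hR] at hIBP
      rw [intervalIntegral.integral_neg, intervalIntegral.integral_const_mul] at hIBP
      rw [hIBP, hGt]
      norm_num
    -- Cauchy–Schwarz for ∫ G F
    have hGFcs : (∫ s in (0:ℝ)..t, G s * F s) ≤ Real.sqrt X * N := by
      have h1 : (∫ s in (0:ℝ)..t, G s * F s)
          = ∫ s in (0:ℝ)..t, (Real.exp (lam*s) * G s) * (Real.exp (-lam*s) * F s) := by
        apply intervalIntegral.integral_congr
        intro s _
        have he : Real.exp (lam*s) * Real.exp (-lam*s) = 1 := by
          rw [← Real.exp_add]; norm_num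
        linear_combination (-(G s * F s)) * he
      have hcs := cs_interval ht.le (f := fun s => Real.exp (lam*s) * G s)
        (g := fun s => Real.exp (-lam*s) * F s)
        ((Real.continuous_exp.comp (continuous_const.mul continuous_id)).mul
          hGcont).continuousOn
        ((Real.continuous_exp.comp (continuous_const.mul continuous_id)).mul
          hFcont).continuousOn
      have h2 : (∫ s in (0:ℝ)..t, (Real.exp (lam*s) * G s)^2) = X := by
        rw [hXdef]
        apply intervalIntegral.integral_congr
        intro s _
        show (Real.exp (lam*s) * G s)^2 = Real.exp (2*lam*s) * G s ^ 2
        rw [mul_pow, sq (Real.exp (lam*s)), ← Real.exp_add]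
        congr 2
        ring
      have h3 : (∫ s in (0:ℝ)..t, (Real.exp (-lam*s) * F s)^2) = NN := by
        rw [hNNdef]
        apply intervalIntegral.integral_congr
        intro s _
        show (Real.exp (-lam*s) * F s)^2 = Real.exp (-2*lam*s) * F s ^ 2
        rw [mul_pow, sq (Real.exp (-lam*s)), ← Real.exp_add]
        congr 2
        ring
      rw [h1]
      calc (∫ s in (0:ℝ)..t, (Real.exp (lam*s) * G s) * (Real.exp (-lam*s) * F s))
          ≤ Real.sqrt (∫ s in (0:ℝ)..t, (Real.exp (lam*s) * G s)^2) *
            Real.sqrt (∫ s in (0:ℝ)..t, (Real.exp (-lam*s) * F s)^2) := hcs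
        _ = Real.sqrt X * N := by rw [h2, h3, hNdef]
    have hXle1 : X ≤ Real.sqrt X * N / lam := by
      rw [le_div_iff₀ hlam]
      nlinarith [hparts2, hGFcs, sq_nonneg (G 0)]
    have hsX : Real.sqrt X ≤ N / lam := by
      rcases eq_or_lt_of_le hX0 with h | h
      · rw [← h, Real.sqrt_zero]; positivity
      · have hs : 0 < Real.sqrt X := Real.sqrt_pos.mpr h
        have hXX : Real.sqrt X * Real.sqrt X = X := Real.mul_self_sqrt hX0
        rw [le_div_iff₀ hlam]
        rw [div_eq_mul_inv] at hXle1
        nlinarith [hXle1, hs, hlam, mul_pos hlam hlam]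
    have hXle : X ≤ NN / lam^2 := by
      have h1 : X = Real.sqrt X ^ 2 := (Real.sq_sqrt hX0).symm
      have h2 : Real.sqrt X ^ 2 ≤ (N/lam)^2 :=
        pow_le_pow_left₀ (Real.sqrt_nonneg _) hsX 2
      rw [div_pow, hNsq] at h2
      linarith [h1 ▸ h2]
    -- the test function
    set c := Real.sqrt lam / (2*N) with hcdef
    have hc0 : 0 < c := by positivity
    set ψ : ℝ → ℝ := fun s => c * (Real.exp (2*lam*s) * G s) with hψdef
    have hψc : Continuous ψ :=
      continuous_const.mul ((Real.continuous_exp.comp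
        (continuous_const.mul continuous_id)).mul hGcont)
    have hψsup : ∀ s ∈ Set.Icc (0:ℝ) t, Real.exp (-lam*s) * |ψ s| ≤ 1/2 := by
      intro s hs
      have habs2 : |ψ s| = c * (Real.exp (2*lam*s) * G s) := by
        apply abs_of_nonneg
        exact mul_nonneg hc0.le (mul_nonneg (Real.exp_pos _).le (hGnonneg s hs))
      rw [habs2]
      have he : Real.exp (-lam*s) * Real.exp (2*lam*s) = Real.exp (lam*s) := by
        rw [← Real.exp_add]; congr 1; ring
      have h1 : Real.exp (-lam*s) * (c * (Real.exp (2*lam*s) * G s))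
          = c * (Real.exp (lam*s) * G s) := by
        rw [← he]; ring
      rw [h1]
      have h2 := hGbd s hs
      have h3 : c * (Real.exp (lam*s) * G s) ≤ c * (N/Q) :=
        mul_le_mul_of_nonneg_left h2 hc0.le
      have h4 : c * (N/Q) ≤ 1/2 := by
        rw [hcdef, div_mul_div_comm, div_le_div_iff₀ (by positivity) (by norm_num)]
        nlinarith [hQge, hN, hsl0, hQpos]
      linarith
    have hψL2 : Real.sqrt lam *
        Real.sqrt (∫ s in (0:ℝ)..t, Real.exp (-2*lam*s) * ψ s ^ 2) ≤ 1/2 := by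
      have hY0 : 0 ≤ ∫ s in (0:ℝ)..t, Real.exp (-2*lam*s) * ψ s ^ 2 :=
        integral_nonneg ht.le (fun s _ => mul_nonneg (Real.exp_pos _).le (sq_nonneg _))
      apply sqrt_mul_sqrt_le hlam.le hY0 (by norm_num)
      have hYeq : (∫ s in (0:ℝ)..t, Real.exp (-2*lam*s) * ψ s ^ 2) = c^2 * X := by
        rw [hXdef, ← intervalIntegral.integral_const_mul]
        apply intervalIntegral.integral_congr
        intro s _
        simp only [hψdef]
        have he : Real.exp (-2*lam*s) * Real.exp (2*lam*s) = 1 := by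
          rw [← Real.exp_add]; norm_num
        linear_combination (c^2 * Real.exp (2*lam*s) * G s^2) * he
      rw [hYeq]
      have hc2 : c^2 = lam/(4*NN) := by
        rw [hcdef, div_pow, Real.sq_sqrt hlam.le, mul_pow, hNsq]
        norm_num
      have h5 : c^2 * X ≤ (lam/(4*NN)) * (NN/lam^2) := by
        rw [hc2]
        exact mul_le_mul_of_nonneg_left hXle (by positivity)
      have h6 : (lam/(4*NN)) * (NN/lam^2) = 1/(4*lam) := by
        field_simp
      rw [h6] at h5
      calc lam * (c^2 * X) ≤ lam * (1/(4*lam)) := mul_le_mul_of_nonneg_left h5 hlam.le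
        _ = 1/4 := by field_simp
        _ = (1/2)^2 := by norm_num
    have hψI : Ilam lam t ψ ≤ 1 := Ilam_le_one ht.le hψsup hψL2
    have hP := hSle ψ hψc hψI
    -- integration by parts for the pairing
    have hwFint : IntervalIntegrable (fun s => -(w s) * F s) volume 0 t :=
      (hwcont.neg.mul hFcont).intervalIntegrable 0 t
    have hgGint : IntervalIntegrable g volume 0 t := hgcont.intervalIntegrable 0 t
    have hpairs : (∫ s in (0:ℝ)..t, G s * g s) = NN := by
      have hIBP := intervalIntegral.integral_mul_deriv_eq_deriv_mul
        (u := G) (u' := fun s => -(w s)) (v := F) (v' := g)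
        (fun x _ => hGderiv x) (fun x _ => hFderiv x)
        (hwcont.neg.intervalIntegrable 0 t) hgGint
      have hR : (∫ x in (0:ℝ)..t, -(w x) * F x)
          = ∫ x in (0:ℝ)..t, -(Real.exp (-2*lam*x) * F x ^ 2) := by
        apply intervalIntegral.integral_congr
        intro x _
        simp only [hwdef]
        ring
      rw [hR, intervalIntegral.integral_neg] at hIBP
      rw [hIBP, hGt, hF0, hNNdef]
      ring
    have hpair : (∫ s in (0:ℝ)..t, Real.exp (-2*lam*s) * |φ' s| * ψ s)
        = Real.sqrt lam * N / 2 := by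
      have h1 : (∫ s in (0:ℝ)..t, Real.exp (-2*lam*s) * |φ' s| * ψ s)
          = ∫ s in (0:ℝ)..t, c * (G s * g s) := by
        apply intervalIntegral.integral_congr
        intro s hsm
        rw [Set.uIcc_of_le ht.le] at hsm
        simp only [hψdef]
        rw [← hgeq s hsm]
        have he : Real.exp (-2*lam*s) * Real.exp (2*lam*s) = 1 := by
          rw [← Real.exp_add]; norm_num
        linear_combination (c * G s * g s) * he
      rw [h1, intervalIntegral.integral_const_mul, hpairs, hcdef, ← hNsq]
      field_simp
    rw [hpair] at hP
    rw [abs_of_nonneg (by positivity)] at hP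
    linarith
  -- Assembly
  have part1 : (⨆ s : Set.Icc (0:ℝ) t, Real.exp (-lam * s) * |φ s|) ≤ |φ 0| + 2 * S := by
    apply ciSup_le
    rintro ⟨s, hs⟩
    have h1 : Real.exp (-lam * s) * |φ s| ≤ Real.exp (-lam * s) * (|φ 0| + F s) :=
      mul_le_mul_of_nonneg_left (hφbound s hs) (Real.exp_pos _).le
    have h2 : Real.exp (-lam * s) ≤ 1 := by
      rw [Real.exp_le_one_iff]
      nlinarith [hs.1, hlam]
    have h3 : Real.exp (-lam * s) * F s ≤ 2 * S := factS s hs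
    nlinarith [abs_nonneg (φ 0), (Real.exp_pos (-lam*s)).le, hFnonneg s hs.1]
  have part2 : Real.sqrt lam *
      Real.sqrt (∫ s in (0:ℝ)..t, Real.exp (-2*lam*s) * φ s ^ 2) ≤ |φ 0| + 3 * S := by
    have hφcont : ContinuousOn φ (Set.Icc (0:ℝ) t) :=
      fun x hx => (hderiv x hx).continuousAt.continuousWithinAt
    have hZ0 : 0 ≤ ∫ s in (0:ℝ)..t, Real.exp (-2*lam*s) * φ s ^ 2 :=
      integral_nonneg ht.le (fun s _ => mul_nonneg (Real.exp_pos _).le (sq_nonneg _))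
    apply sqrt_mul_sqrt_le hlam.le hZ0 (by positivity)
    have hint1 : IntervalIntegrable (fun s => Real.exp (-2*lam*s) * φ s ^ 2) volume 0 t :=
      ((Real.continuous_exp.comp
        (continuous_const.mul continuous_id)).continuousOn.mul
        (hφcont.pow 2)).intervalIntegrable_of_Icc ht.le
    have hecont : Continuous (fun s : ℝ => Real.exp (-2*lam*s)) :=
      Real.continuous_exp.comp (continuous_const.mul continuous_id)
    have hint2 : IntervalIntegrable
        (fun s => 2*|φ 0|^2 * Real.exp (-2*lam*s) + 2*(Real.exp (-2*lam*s) * F s^2))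
        volume 0 t :=
      ((continuous_const.mul hecont).add (continuous_const.mul hwFcont)).intervalIntegrable 0 t
    have hZ1 : (∫ s in (0:ℝ)..t, Real.exp (-2*lam*s) * φ s ^ 2)
        ≤ ∫ s in (0:ℝ)..t, (2*|φ 0|^2 * Real.exp (-2*lam*s)
            + 2*(Real.exp (-2*lam*s) * F s^2)) := by
      apply intervalIntegral.integral_mono_on ht.le hint1 hint2
      intro s hs
      have h1 : φ s^2 ≤ 2*|φ 0|^2 + 2*F s^2 := by
        nlinarith [hφbound s hs, abs_nonneg (φ s), sq_abs (φ s), sq_nonneg (|φ 0| - F s),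
          hFnonneg s hs.1, abs_nonneg (φ 0)]
      nlinarith [mul_le_mul_of_nonneg_left h1 (Real.exp_pos (-2*lam*s)).le]
    have hsplitZ : (∫ s in (0:ℝ)..t, (2*|φ 0|^2 * Real.exp (-2*lam*s)
            + 2*(Real.exp (-2*lam*s) * F s^2)))
        = 2*|φ 0|^2 * (∫ s in (0:ℝ)..t, Real.exp (-2*lam*s)) + 2*NN := by
      rw [intervalIntegral.integral_add ((hecont.intervalIntegrable 0 t).const_mul _)
        ((hwFcont.intervalIntegrable 0 t).const_mul _),
        intervalIntegral.integral_const_mul, intervalIntegral.integral_const_mul, hNNdef]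
    have hE : (∫ s in (0:ℝ)..t, Real.exp (-2*lam*s)) ≤ 1/(2*lam) := by
      have hcg : (∫ s in (0:ℝ)..t, Real.exp (-2*lam*s))
          = ∫ s in (0:ℝ)..t, Real.exp (2*lam*(0-s)) := by
        apply intervalIntegral.integral_congr
        intro s _
        show Real.exp (-2*lam*s) = Real.exp (2*lam*(0-s))
        congr 1
        ring
      rw [hcg]
      exact int_exp_left_le (by positivity) ht.le
    have hE0 : 0 ≤ ∫ s in (0:ℝ)..t, Real.exp (-2*lam*s) :=
      integral_nonneg ht.le (fun s _ => (Real.exp_pos _).le)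
    have hlNN : lam * NN ≤ 4*S^2 := by
      have h1 : (Real.sqrt lam * N)^2 ≤ (2*S)^2 :=
        pow_le_pow_left₀ (by positivity) factN 2
      rw [mul_pow, Real.sq_sqrt hlam.le, hNsq] at h1
      nlinarith [h1]
    have hZ2 : (∫ s in (0:ℝ)..t, Real.exp (-2*lam*s) * φ s ^ 2)
        ≤ 2*|φ 0|^2 * (1/(2*lam)) + 2*NN := by
      have h1 : 2*|φ 0|^2 * (∫ s in (0:ℝ)..t, Real.exp (-2*lam*s))
          ≤ 2*|φ 0|^2 * (1/(2*lam)) :=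
        mul_le_mul_of_nonneg_left hE (by positivity)
      rw [hsplitZ] at hZ1
      linarith
    calc lam * ∫ s in (0:ℝ)..t, Real.exp (-2*lam*s) * φ s ^ 2
        ≤ lam * (2*|φ 0|^2 * (1/(2*lam)) + 2*NN) :=
          mul_le_mul_of_nonneg_left hZ2 hlam.le
      _ = |φ 0|^2 + 2*(lam*NN) := by field_simp
      _ ≤ |φ 0|^2 + 8*S^2 := by linarith
      _ ≤ (|φ 0| + 3*S)^2 := by nlinarith [abs_nonneg (φ 0), hS0]
  have : Ilam lam t φ = (⨆ s : Set.Icc (0:ℝ) t, Real.exp (-lam * s) * |φ s|) +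
      Real.sqrt lam * Real.sqrt (∫ s in (0:ℝ)..t, Real.exp (-2*lam*s) * φ s ^ 2) := rfl
  rw [this]
  nlinarith [abs_nonneg (φ 0)]
end

section
/- Let $\Sigma$ be a symmetric positive definite $3\times3$ real matrix, written in block form $\Sigma=\begin{pmatrix}\sigma_0 & \bm{\sigma}^{\rm T}\\ \bm{\sigma} & \Sigma'\end{pmatrix}$ with $\sigma_0\in\mathbb{R}$, $\bm{\sigma}\in\mathbb{R}^2$, and let $N\in\mathbb{R}^2$ be a unit vector, $G_{\rm nor}=\begin{pmatrix}0&N^{\rm T}\\ N&0_{2\times2}\end{pmatrix}$. Then the eigenvalues of $\Sigma G_{\rm nor}$ are $0$, $N\cdot\bm{\sigma}+\sqrt{\sigma_0\,(N\cdot\Sigma' N)}$, and $N\cdot\bm{\sigma}-\sqrt{\sigma_0\,(N\cdot\Sigma' N)}$, and the last two are respectively positive and negative. -/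
open Matrix

private lemma aux_mem_spectrum (M : Matrix (Fin 3) (Fin 3) ℝ) (μ : ℝ) :
    μ ∈ spectrum ℝ M ↔ (μ • (1 : Matrix (Fin 3) (Fin 3) ℝ) - M).det = 0 := by
  rw [spectrum.mem_iff, Algebra.algebraMap_eq_smul_one, Matrix.isUnit_iff_isUnit_det,
    isUnit_iff_ne_zero, not_ne_iff]

private lemma aux_det (Sig : Matrix (Fin 3) (Fin 3) ℝ) (N : Fin 2 → ℝ) (μ : ℝ) (a b r : ℝ)
    (ha : a = N 0 * Sig 0 1 + N 1 * Sig 0 2)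
    (hb : b = Sig 0 0 * (N 0 ^ 2 * Sig 1 1 + 2 * (N 0 * N 1) * Sig 1 2 + N 1 ^ 2 * Sig 2 2))
    (h21 : Sig 2 1 = Sig 1 2)
    (h10 : Sig 1 0 = Sig 0 1) (h20 : Sig 2 0 = Sig 0 2)
    (hr : r ^ 2 = b) :
    (μ • (1 : Matrix (Fin 3) (Fin 3) ℝ)
        - Sig * !![0, N 0, N 1; N 0, 0, 0; N 1, 0, 0]).det
      = μ * (μ - (a + r)) * (μ - (a - r)) := by
  rw [Matrix.det_fin_three]
  simp [Matrix.mul_apply, Fin.sum_univ_three, Matrix.one_apply, Matrix.vecHead, Matrix.vecTail]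
  rw [h21, h10, h20]
  subst ha hb
  linear_combination μ * hr

/-- for `Σ` symmetric positive definite (block form
`Σ = [[σ₀, σᵀ],[σ, Σ']]`) and `N ∈ ℝ²` a unit vector, the eigenvalues of `Σ G_nor`
are `0`, `N⋅σ ± √(σ₀ (N⋅Σ'N))`, respectively zero, positive and negative. -/
theorem stmt16 (Sig : Matrix (Fin 3) (Fin 3) ℝ) (hSigsymm : Sig.IsSymm) (hSigpos : Sig.PosDef)
    (N : Fin 2 → ℝ) (hN : N 0 ^ 2 + N 1 ^ 2 = 1) :
    spectrum ℝ (Sig * (!![0, N 0, N 1; N 0, 0, 0; N 1, 0, 0] : Matrix (Fin 3) (Fin 3) ℝ)) =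
      {0,
        (N 0 * Sig 1 0 + N 1 * Sig 2 0) +
          Real.sqrt (Sig 0 0 *
            (∑ i : Fin 2, ∑ j : Fin 2, N i * Sig i.succ j.succ * N j)),
        (N 0 * Sig 1 0 + N 1 * Sig 2 0) -
          Real.sqrt (Sig 0 0 *
            (∑ i : Fin 2, ∑ j : Fin 2, N i * Sig i.succ j.succ * N j))} ∧
    0 < (N 0 * Sig 1 0 + N 1 * Sig 2 0) +
        Real.sqrt (Sig 0 0 * (∑ i : Fin 2, ∑ j : Fin 2, N i * Sig i.succ j.succ * N j)) ∧
    (N 0 * Sig 1 0 + N 1 * Sig 2 0) -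
        Real.sqrt (Sig 0 0 * (∑ i : Fin 2, ∑ j : Fin 2, N i * Sig i.succ j.succ * N j)) < 0 := by
  have h10 : Sig 1 0 = Sig 0 1 := by
    have := congrFun (congrFun hSigsymm 0) 1; simpa [Matrix.transpose_apply] using this
  have h20 : Sig 2 0 = Sig 0 2 := by
    have := congrFun (congrFun hSigsymm 0) 2; simpa [Matrix.transpose_apply] using this
  have h21 : Sig 2 1 = Sig 1 2 := by
    have := congrFun (congrFun hSigsymm 1) 2; simpa [Matrix.transpose_apply] using this
  set a : ℝ := N 0 * Sig 1 0 + N 1 * Sig 2 0 with hadef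
  have ha : a = N 0 * Sig 0 1 + N 1 * Sig 0 2 := by rw [hadef, h10, h20]
  have hsum : (∑ i : Fin 2, ∑ j : Fin 2, N i * Sig i.succ j.succ * N j)
      = N 0 ^ 2 * Sig 1 1 + 2 * (N 0 * N 1) * Sig 1 2 + N 1 ^ 2 * Sig 2 2 := by
    have e0 : (0 : Fin 2).succ = 1 := rfl
    have e1 : (1 : Fin 2).succ = 2 := rfl
    simp only [Fin.sum_univ_two, e0, e1]
    rw [h21]; ring
  rw [hsum]
  set bp : ℝ := N 0 ^ 2 * Sig 1 1 + 2 * (N 0 * N 1) * Sig 1 2 + N 1 ^ 2 * Sig 2 2 with hbpdef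
  -- positivity of the quadratic form
  have hQ : ∀ t s : ℝ, (t ≠ 0 ∨ s ≠ 0) →
      0 < Sig 0 0 * t ^ 2 + 2 * a * t * s + bp * s ^ 2 := by
    intro t s hts
    have hx : (![t, N 0 * s, N 1 * s] : Fin 3 → ℝ) ≠ 0 := by
      intro h
      have h0 := congrFun h 0
      have h1 := congrFun h 1
      have h2 := congrFun h 2
      simp at h0 h1 h2
      rcases hts with ht | hs
      · exact ht h0
      · rcases h1 with h1 | h1
        · rcases h2 with h2 | h2
          · rw [h1, h2] at hN; norm_num at hN
          · exact hs h2
        · exact hs h1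
    have hpos := hSigpos.dotProduct_mulVec_pos hx
    have hdot : (star (![t, N 0 * s, N 1 * s] : Fin 3 → ℝ)) ⬝ᵥ
        Sig.mulVec ![t, N 0 * s, N 1 * s]
        = Sig 0 0 * t ^ 2 + 2 * a * t * s + bp * s ^ 2 := by
      simp [dotProduct, Matrix.mulVec, Fin.sum_univ_three]
      rw [ha, hbpdef]
      rw [h21, h10, h20]
      ring
    rw [hdot] at hpos
    exact hpos
  have hs00 : 0 < Sig 0 0 := by simpa using hQ 1 0 (Or.inl one_ne_zero)
  have hbp' : 0 < bp := by have := hQ 0 1 (Or.inr one_ne_zero); simpa using this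
  have hdisc : a ^ 2 < Sig 0 0 * bp := by
    have := hQ (-a) (Sig 0 0) (Or.inr (ne_of_gt hs00))
    nlinarith
  have hbpos : 0 < Sig 0 0 * bp := mul_pos hs00 hbp'
  set r : ℝ := Real.sqrt (Sig 0 0 * bp) with hrdef
  have hsq : r ^ 2 = Sig 0 0 * bp := Real.sq_sqrt hbpos.le
  have hsnn : 0 ≤ r := Real.sqrt_nonneg _
  have hpos : 0 < a + r := by nlinarith
  have hneg : a - r < 0 := by nlinarith
  refine ⟨?_, hpos, hneg⟩
  ext μ
  rw [aux_mem_spectrum, aux_det Sig N μ a (Sig 0 0 * bp) r ha (by rw [hbpdef]) h21 h10 h20 hsq]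
  simp only [Set.mem_insert_iff, Set.mem_singleton_iff, mul_eq_zero, sub_eq_zero]
  tauto
end

section
/- Let $(u,\psi_{\rm i})$ with $u=(\zeta,v^{\rm T})^{\rm T}$ be a smooth solution of the system $\partial_t\zeta+\nabla\cdot(hv)=0$, $\partial_t v+\nabla({\mathtt g}\zeta+\tfrac12|v|^2)=0$ in $(0,T)\times\mathcal{E}$, with boundary conditions $N\cdot(hv)=\Lambda\psi_{\rm i}$ and $\partial_t\psi_{\rm i}=-{\mathtt g}\zeta-\tfrac12|v|^2$ on $(0,T)\times\mathit{\Gamma}$, where $h=H_0+\zeta$, $\mathcal{E}$ is the exterior of a smooth Jordan curve $\mathit{\Gamma}$ with inward-pointing exterior normal convention $N$ pointing from the interior into $\mathcal{E}$, and $\Lambda$ is the symmetric Dirichlet-to-Neumann map of the interior domain. Then the total fluid energy $E_{\rm fluid}(t)=\tfrac12\int_{\mathcal{E}}{\mathtt g}\zeta^2+\tfrac12\int_{\mathcal{E}}h|v|^2+\tfrac12\int_{\mathit{\Gamma}}\psi_{\rm i}\Lambda\psi_{\rm i}$ is constant in time: $E_{\rm fluid}(t)=E_{\rm fluid}(0)$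 for all $t\in[0,T]$. -/
open Set MeasureTheory

/-- conservation of the total fluid energy
`E_fluid(t) = ½∫_𝓔 gζ² + ½∫_𝓔 h|v|² + ½∫_Γ ψᵢ Λψᵢ`
for regular solutions of the wave-structure interaction problem: shallow water equations
in the exterior domain `𝓔`, boundary conditions `N⋅(hv) = Λψᵢ` and
`∂_tψᵢ = -gζ - ½|v|²` on `Γ`, with `Λ` the symmetric Dirichlet-to-Neumann map of the
interior domain.  All integration by parts/decay assumptions are supplied as
hypotheses (`hdiv`, `hderivE`, `hderivB`, `hcont`). -/
theorem stmt19 (g H₀ T : ℝ) (hg : 0 < g) (hH₀ : 0 < H₀) (hT : 0 < T)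
    (E Γset : Set (Fin 2 → ℝ)) (hE : IsOpen E) (hΓ : Γset = frontier E)
    (μΓ : Measure (Fin 2 → ℝ)) (hμΓ : ∀ s, μΓ s = μΓ (s ∩ Γset))
    (Nv : (Fin 2 → ℝ) → Fin 2 → ℝ)
    (Λ : ((Fin 2 → ℝ) → ℝ) → (Fin 2 → ℝ) → ℝ)
    (hΛsym : ∀ φ χ : (Fin 2 → ℝ) → ℝ,
      (∫ x, Λ φ x * χ x ∂μΓ) = ∫ x, Λ χ x * φ x ∂μΓ)
    (ζ : ℝ → (Fin 2 → ℝ) → ℝ) (v : ℝ → (Fin 2 → ℝ) → Fin 2 → ℝ)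
    (ψi : ℝ → (Fin 2 → ℝ) → ℝ)
    (hζ : ContDiffOn ℝ (⊤ : ℕ∞) (fun p : ℝ × (Fin 2 → ℝ) => ζ p.1 p.2) (Ioo 0 T ×ˢ E))
    (hv : ContDiffOn ℝ (⊤ : ℕ∞) (fun p : ℝ × (Fin 2 → ℝ) => v p.1 p.2) (Ioo 0 T ×ˢ E))
    -- mass conservation in the exterior domain
    (hmass : ∀ t ∈ Ioo 0 T, ∀ x ∈ E,
      deriv (fun s => ζ s x) t +
        (∑ i : Fin 2,
          fderiv ℝ (fun y => (H₀ + ζ t y) * v t y i) x (Pi.single i 1)) = 0)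
    -- momentum equation (Bernoulli form) in the exterior domain
    (hmom : ∀ t ∈ Ioo 0 T, ∀ x ∈ E, ∀ j : Fin 2,
      deriv (fun s => v s x j) t +
        fderiv ℝ (fun y => g * ζ t y + (v t y 0 ^ 2 + v t y 1 ^ 2) / 2) x
          (Pi.single j 1) = 0)
    -- boundary condition `N⋅(hv) = Λψᵢ` on `Γ`
    (hbc1 : ∀ t ∈ Ioo 0 T, ∀ x ∈ Γset,
      (∑ i : Fin 2, Nv x i * ((H₀ + ζ t x) * v t x i)) = Λ (fun y => ψi t y) x)
    -- boundary condition `∂_tψᵢ = -gζ - ½|v|²` on `Γ`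
    (hbc2 : ∀ t ∈ Ioo 0 T, ∀ x ∈ Γset,
      HasDerivAt (fun s => ψi s x)
        (-(g * ζ t x + (v t x 0 ^ 2 + v t x 1 ^ 2) / 2)) t)
    -- divergence theorem for the energy flux (decay at infinity); the outward normal
    -- of `𝓔` on `Γ` is `-N`, `N` pointing from the interior domain into `𝓔`
    (hdiv : ∀ t ∈ Ioo 0 T,
      (∫ x in E, ∑ i : Fin 2,
        fderiv ℝ (fun y =>
          (g * ζ t y + (v t y 0 ^ 2 + v t y 1 ^ 2) / 2) * ((H₀ + ζ t y) * v t y i))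
          x (Pi.single i 1)) =
        -∫ x, ∑ i : Fin 2,
          Nv x i *
            ((g * ζ t x + (v t x 0 ^ 2 + v t x 1 ^ 2) / 2) *
              ((H₀ + ζ t x) * v t x i)) ∂μΓ)
    -- differentiation under the integral sign for the interior energy
    (hderivE : ∀ t ∈ Ioo 0 T,
      HasDerivAt
        (fun s => ∫ x in E,
          (g * ζ s x ^ 2 / 2 + (H₀ + ζ s x) * (v s x 0 ^ 2 + v s x 1 ^ 2) / 2))
        (∫ x in E,
          deriv (fun s =>
            g * ζ s x ^ 2 / 2 + (H₀ + ζ s x) * (v s x 0 ^ 2 + v s x 1 ^ 2) / 2) t) t)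
    -- differentiation under the integral sign for the boundary energy
    (hderivB : ∀ t ∈ Ioo 0 T,
      HasDerivAt (fun s => ∫ x, ψi s x * Λ (fun y => ψi s y) x ∂μΓ)
        (2 * ∫ x, deriv (fun s => ψi s x) t * Λ (fun y => ψi t y) x ∂μΓ) t)
    -- continuity of the total energy up to the endpoints
    (hcont : ContinuousOn
      (fun t =>
        (∫ x in E,
          (g * ζ t x ^ 2 / 2 + (H₀ + ζ t x) * (v t x 0 ^ 2 + v t x 1 ^ 2) / 2)) +
          (1 / 2) * ∫ x, ψi t x * Λ (fun y => ψi t y) x ∂μΓ)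
      (Icc 0 T)) :
    ∀ t ∈ Icc (0 : ℝ) T,
      (∫ x in E,
        (g * ζ t x ^ 2 / 2 + (H₀ + ζ t x) * (v t x 0 ^ 2 + v t x 1 ^ 2) / 2)) +
          (1 / 2) * (∫ x, ψi t x * Λ (fun y => ψi t y) x ∂μΓ) =
        (∫ x in E,
          (g * ζ 0 x ^ 2 / 2 + (H₀ + ζ 0 x) * (v 0 x 0 ^ 2 + v 0 x 1 ^ 2) / 2)) +
          (1 / 2) * (∫ x, ψi 0 x * Λ (fun y => ψi 0 y) x ∂μΓ) := by
  -- abbreviations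
  set F : ℝ → ℝ := fun t =>
    (∫ x in E,
      (g * ζ t x ^ 2 / 2 + (H₀ + ζ t x) * (v t x 0 ^ 2 + v t x 1 ^ 2) / 2)) +
      (1 / 2) * ∫ x, ψi t x * Λ (fun y => ψi t y) x ∂μΓ with hF
  -- the measure μΓ is concentrated on Γset
  have hnull : μΓ Γsetᶜ = 0 := by
    have := hμΓ Γsetᶜ
    simpa [Set.compl_inter_self] using this
  have haeΓ : ∀ᵐ x ∂μΓ, x ∈ Γset := by
    rw [MeasureTheory.ae_iff]
    exact hnull
  -- pointwise identity: time derivative of energy density = - divergence of flux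
  have key : ∀ t ∈ Ioo 0 T, ∀ x ∈ E,
      deriv (fun s => g * ζ s x ^ 2 / 2 +
          (H₀ + ζ s x) * (v s x 0 ^ 2 + v s x 1 ^ 2) / 2) t =
        -(∑ i : Fin 2, fderiv ℝ (fun y =>
            (g * ζ t y + (v t y 0 ^ 2 + v t y 1 ^ 2) / 2) *
              ((H₀ + ζ t y) * v t y i)) x (Pi.single i 1)) := by
    intro t ht x hx
    have hopen : IsOpen (Ioo 0 T ×ˢ E) := isOpen_Ioo.prod hE
    have hmem : ((t, x) : ℝ × (Fin 2 → ℝ)) ∈ Ioo 0 T ×ˢ E := ⟨ht, hx⟩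
    have hζp : DifferentiableAt ℝ (fun p : ℝ × (Fin 2 → ℝ) => ζ p.1 p.2) (t, x) :=
      (hζ.contDiffAt (hopen.mem_nhds hmem)).differentiableAt (by simp)
    have hvp : DifferentiableAt ℝ (fun p : ℝ × (Fin 2 → ℝ) => v p.1 p.2) (t, x) :=
      (hv.contDiffAt (hopen.mem_nhds hmem)).differentiableAt (by simp)
    have hζt : DifferentiableAt ℝ (fun s => ζ s x) t :=
      hζp.comp (g := fun p : ℝ × (Fin 2 → ℝ) => ζ p.1 p.2) (f := fun s : ℝ => (s, x)) t (differentiableAt_fun_id.prodMk (differentiableAt_const x))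
    have hζx : DifferentiableAt ℝ (fun y => ζ t y) x :=
      hζp.comp (g := fun p : ℝ × (Fin 2 → ℝ) => ζ p.1 p.2) (f := fun y : Fin 2 → ℝ => (t, y)) x ((differentiableAt_const _).prodMk differentiableAt_fun_id)
    have hvt : ∀ j : Fin 2, DifferentiableAt ℝ (fun s => v s x j) t := by
      intro j
      exact differentiableAt_pi.1
        (hvp.comp (g := fun p : ℝ × (Fin 2 → ℝ) => v p.1 p.2) (f := fun s : ℝ => (s, x)) t (differentiableAt_fun_id.prodMk (differentiableAt_const x))) j
    have hvx : ∀ j : Fin 2, DifferentiableAt ℝ (fun y => v t y j) x := by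
      intro j
      exact differentiableAt_pi.1
        (hvp.comp (g := fun p : ℝ × (Fin 2 → ℝ) => v p.1 p.2) (f := fun y : Fin 2 → ℝ => (t, y)) x ((differentiableAt_const _).prodMk differentiableAt_fun_id)) j
    set a := deriv (fun s => ζ s x) t with ha
    set b : Fin 2 → ℝ := fun j => deriv (fun s => v s x j) t with hb
    have hA : HasDerivAt (fun s => ζ s x) a t := hζt.hasDerivAt
    have hB : ∀ j, HasDerivAt (fun s => v s x j) (b j) t := fun j => (hvt j).hasDerivAt
    -- time derivative of the energy density
    have hEt : HasDerivAt (fun s => g * ζ s x ^ 2 / 2 +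
        (H₀ + ζ s x) * (v s x 0 ^ 2 + v s x 1 ^ 2) / 2)
        (g * ((2 : ℕ) * ζ t x ^ 1 * a) / 2 +
          ((0 + a) * (v t x 0 ^ 2 + v t x 1 ^ 2) +
            (H₀ + ζ t x) * ((2 : ℕ) * v t x 0 ^ 1 * b 0 +
              (2 : ℕ) * v t x 1 ^ 1 * b 1)) / 2) t := by
      exact (((hA.pow 2).const_mul g).div_const 2).add
        ((((hasDerivAt_const t H₀).add hA).mul
          (((hB 0).pow 2).add ((hB 1).pow 2))).div_const 2)
    rw [hEt.deriv]
    -- space differentiability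
    have hΦ : DifferentiableAt ℝ
        (fun y => g * ζ t y + (v t y 0 ^ 2 + v t y 1 ^ 2) / 2) x :=
      by
        have hv2 : DifferentiableAt ℝ (fun y => v t y 0 ^ 2 + v t y 1 ^ 2) x :=
          ((hvx 0).pow 2).add ((hvx 1).pow 2)
        have hv3 : DifferentiableAt ℝ
            (fun y => (v t y 0 ^ 2 + v t y 1 ^ 2) / 2) x := by
          simp only [div_eq_mul_inv]; exact hv2.mul_const _
        exact (hζx.const_mul g).add hv3
    have hψ : ∀ i : Fin 2, DifferentiableAt ℝ (fun y => (H₀ + ζ t y) * v t y i) x :=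
      fun i => ((differentiableAt_const H₀).add hζx).mul (hvx i)
    -- product rule for the flux
    have hprod : ∀ i : Fin 2,
        fderiv ℝ (fun y =>
            (g * ζ t y + (v t y 0 ^ 2 + v t y 1 ^ 2) / 2) *
              ((H₀ + ζ t y) * v t y i)) x (Pi.single i 1) =
          (g * ζ t x + (v t x 0 ^ 2 + v t x 1 ^ 2) / 2) *
              fderiv ℝ (fun y => (H₀ + ζ t y) * v t y i) x (Pi.single i 1) +
            ((H₀ + ζ t x) * v t x i) *
              fderiv ℝ (fun y =>
                g * ζ t y + (v t y 0 ^ 2 + v t y 1 ^ 2) / 2) x (Pi.single i 1) := by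
      intro i
      rw [fderiv_fun_mul hΦ (hψ i)]
      simp [smul_eq_mul]
    have hm0 : fderiv ℝ (fun y => g * ζ t y + (v t y 0 ^ 2 + v t y 1 ^ 2) / 2) x
        (Pi.single (0 : Fin 2) 1) = -(b 0) := by
      have := hmom t ht x hx 0; linarith
    have hm1 : fderiv ℝ (fun y => g * ζ t y + (v t y 0 ^ 2 + v t y 1 ^ 2) / 2) x
        (Pi.single (1 : Fin 2) 1) = -(b 1) := by
      have := hmom t ht x hx 1; linarith
    have hms := hmass t ht x hx
    rw [Fin.sum_univ_two] at hms ⊢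
    rw [hprod 0, hprod 1, hm0, hm1]
    have hms' : fderiv ℝ (fun y => (H₀ + ζ t y) * v t y 0) x (Pi.single 0 1) +
        fderiv ℝ (fun y => (H₀ + ζ t y) * v t y 1) x (Pi.single 1 1) = -a := by
      linarith
    push_cast
    linear_combination (g * ζ t x + (v t x 0 ^ 2 + v t x 1 ^ 2) / 2) * hms'
  -- F has zero derivative on (0, T)
  have hzero : ∀ t ∈ Ioo 0 T, HasDerivAt F 0 t := by
    intro t ht
    have hEint : (∫ x in E,
        deriv (fun s => g * ζ s x ^ 2 / 2 +
          (H₀ + ζ s x) * (v s x 0 ^ 2 + v s x 1 ^ 2) / 2) t) =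
        ∫ x, (g * ζ t x + (v t x 0 ^ 2 + v t x 1 ^ 2) / 2) *
          Λ (fun y => ψi t y) x ∂μΓ := by
      rw [MeasureTheory.setIntegral_congr_fun hE.measurableSet
        (fun x hx => key t ht x hx)]
      rw [MeasureTheory.integral_neg, hdiv t ht, neg_neg]
      refine MeasureTheory.integral_congr_ae ?_
      filter_upwards [haeΓ] with x hx
      have hb1 := hbc1 t ht x hx
      rw [Fin.sum_univ_two] at hb1 ⊢
      calc Nv x 0 * ((g * ζ t x + (v t x 0 ^ 2 + v t x 1 ^ 2) / 2) *
              ((H₀ + ζ t x) * v t x 0)) +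
            Nv x 1 * ((g * ζ t x + (v t x 0 ^ 2 + v t x 1 ^ 2) / 2) *
              ((H₀ + ζ t x) * v t x 1))
          = (g * ζ t x + (v t x 0 ^ 2 + v t x 1 ^ 2) / 2) *
              (Nv x 0 * ((H₀ + ζ t x) * v t x 0) +
                Nv x 1 * ((H₀ + ζ t x) * v t x 1)) := by ring
        _ = _ := by rw [hb1]
    have hBint : (∫ x, deriv (fun s => ψi s x) t * Λ (fun y => ψi t y) x ∂μΓ) =
        -∫ x, (g * ζ t x + (v t x 0 ^ 2 + v t x 1 ^ 2) / 2) *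
          Λ (fun y => ψi t y) x ∂μΓ := by
      rw [← MeasureTheory.integral_neg]
      refine MeasureTheory.integral_congr_ae ?_
      filter_upwards [haeΓ] with x hx
      rw [(hbc2 t ht x hx).deriv]
      ring
    have hsum : HasDerivAt F
        ((∫ x in E,
          deriv (fun s => g * ζ s x ^ 2 / 2 +
            (H₀ + ζ s x) * (v s x 0 ^ 2 + v s x 1 ^ 2) / 2) t) +
          (1 / 2) * (2 * ∫ x, deriv (fun s => ψi s x) t *
            Λ (fun y => ψi t y) x ∂μΓ)) t :=
      (hderivE t ht).add ((hderivB t ht).const_mul (1 / 2))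
    have : (∫ x in E,
          deriv (fun s => g * ζ s x ^ 2 / 2 +
            (H₀ + ζ s x) * (v s x 0 ^ 2 + v s x 1 ^ 2) / 2) t) +
          (1 / 2) * (2 * ∫ x, deriv (fun s => ψi s x) t *
            Λ (fun y => ψi t y) x ∂μΓ) = 0 := by
      rw [hEint, hBint]; ring
    rwa [this] at hsum
  -- conclude by monotonicity in both directions
  intro t ht
  have hconvex : Convex ℝ (Icc (0 : ℝ) T) := convex_Icc 0 T
  have hint : interior (Icc (0 : ℝ) T) = Ioo 0 T := interior_Icc
  have hdiffF : DifferentiableOn ℝ F (interior (Icc (0 : ℝ) T)) := by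
    rw [hint]
    exact fun x hx => ((hzero x hx).differentiableAt).differentiableWithinAt
  have hderivF : ∀ x ∈ interior (Icc (0 : ℝ) T), deriv F x = 0 := by
    rw [hint]
    exact fun x hx => (hzero x hx).deriv
  have hmono : MonotoneOn F (Icc 0 T) :=
    monotoneOn_of_deriv_nonneg hconvex hcont hdiffF
      (fun x hx => (hderivF x hx).ge)
  have hanti : AntitoneOn F (Icc 0 T) :=
    antitoneOn_of_deriv_nonpos hconvex hcont hdiffF
      (fun x hx => (hderivF x hx).le)
  have h0 : (0 : ℝ) ∈ Icc (0 : ℝ) T := ⟨le_refl 0, hT.le⟩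
  exact le_antisymm (hanti h0 ht ht.1) (hmono h0 ht ht.1)
end
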